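/- Consider the restricted greedy allocation process with machines 1,…,n, positive integer bid vector b, tie-breaking linear order π, and allowed sets M_1,…,M_m. Fix a machine i₀ and let b' be a bid vector that agrees with b on every machine except i₀ and satisfies b'_{i₀} > b_{i₀} ≥ 1. Then for every time t ∈ {1,…,m}, the number of jobs among the first t jobs assigned to machine i₀ under bids b' is at least the number assigned to machine i₀ under bids b. In particular, the number of jobs a machine receives is a nondecreasing function of its own bid, for every fixed realization of the sets M_t and the order π. -/
import Mathlib


/-- `greedyHeight m assign t i` is the number of jobs among the first `t` jobs
(the jobs being `Fin m`) that `assign` sends to machine `i`. -/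
def greedyHeight {n : ℕ} (m : ℕ) (assign : Fin m → Fin n) (t : ℕ) (i : Fin n) : ℕ :=
  (Finset.univ.filter (fun s : Fin m => (s : ℕ) < t ∧ assign s = i)).card

/-- `IsRestrictedGreedy b π Msets assign` says that `assign` is the outcome of the
restricted greedy allocation process with bids `b`, tie-breaking order given by the
injective labelling `π`, and allowed machine sets `Msets`: each job `t` goes to a
machine of `Msets t` minimizing the post-placement load `⌊(h + 1)/bid⌋`,
ties broken by `π`. -/
def IsRestrictedGreedy {n m : ℕ} (b : Fin n → ℕ) (π : Fin n → ℕ)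
    (Msets : Fin m → Finset (Fin n)) (assign : Fin m → Fin n) : Prop :=
  ∀ t : Fin m, assign t ∈ Msets t ∧
    ∀ j ∈ Msets t, j ≠ assign t →
      (greedyHeight m assign t (assign t) + 1) / b (assign t)
          < (greedyHeight m assign t j + 1) / b j ∨
      ((greedyHeight m assign t (assign t) + 1) / b (assign t)
          = (greedyHeight m assign t j + 1) / b j ∧ π (assign t) < π j)

lemma greedyHeight_zero {n m : ℕ} (assign : Fin m → Fin n) (i : Fin n) :
    greedyHeight m assign 0 i = 0 := by
  simp [greedyHeight]

lemma greedyHeight_succ {n : ℕ} {m : ℕ} (assign : Fin m → Fin n) {t : ℕ} (ht : t < m) (i : Fin n) :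
    greedyHeight m assign (t+1) i =
      greedyHeight m assign t i + (if assign ⟨t, ht⟩ = i then 1 else 0) := by
  classical
  unfold greedyHeight
  have hsplit : (Finset.univ.filter (fun s : Fin m => (s:ℕ) < t+1 ∧ assign s = i))
      = (Finset.univ.filter (fun s : Fin m => (s:ℕ) < t ∧ assign s = i)) ∪
        (Finset.univ.filter (fun s : Fin m => s = ⟨t, ht⟩ ∧ assign s = i)) := by
    ext s
    simp only [Finset.mem_filter, Finset.mem_union, Finset.mem_univ, true_and]
    constructor
    · rintro ⟨hlt, ha⟩
      rcases Nat.lt_succ_iff_lt_or_eq.mp hlt with h | h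
      · exact Or.inl ⟨h, ha⟩
      · exact Or.inr ⟨Fin.ext h, ha⟩
    · rintro (⟨h, ha⟩ | ⟨h, ha⟩)
      · exact ⟨Nat.lt_succ_of_lt h, ha⟩
      · refine ⟨?_, ha⟩; rw [h]; exact Nat.lt_succ_self t
  have hdisj : Disjoint (Finset.univ.filter (fun s : Fin m => (s:ℕ) < t ∧ assign s = i))
      (Finset.univ.filter (fun s : Fin m => s = ⟨t, ht⟩ ∧ assign s = i)) := by
    rw [Finset.disjoint_left]
    intro s hs hs'
    simp only [Finset.mem_filter, Finset.mem_univ, true_and] at hs hs'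
    rw [hs'.1] at hs
    exact absurd hs.1 (lt_irrefl t)
  rw [hsplit, Finset.card_union_of_disjoint hdisj]
  congr 1
  have : (Finset.univ.filter (fun s : Fin m => s = ⟨t, ht⟩ ∧ assign s = i))
      = if assign ⟨t, ht⟩ = i then {(⟨t, ht⟩ : Fin m)} else ∅ := by
    ext s
    by_cases h : assign ⟨t, ht⟩ = i <;>
      simp only [h, if_true, if_false, Finset.mem_filter, Finset.mem_univ, true_and,
        Finset.mem_singleton, Finset.notMem_empty, iff_false] <;>
      [skip; rintro ⟨rfl, ha⟩]
    · constructor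
      · rintro ⟨rfl, _⟩; rfl
      · rintro rfl; exact ⟨rfl, h⟩
    · exact h ha
  rw [this]
  by_cases h : assign ⟨t, ht⟩ = i <;> simp [h]

lemma greedyHeight_stable {n : ℕ} {m : ℕ} (assign : Fin m → Fin n) {t : ℕ} (ht : ¬ t < m)
    (i : Fin n) :
    greedyHeight m assign (t+1) i = greedyHeight m assign t i := by
  unfold greedyHeight
  congr 1
  apply Finset.filter_congr
  intro s _
  have : (s : ℕ) < m := s.isLt
  constructor <;> rintro ⟨h1, h2⟩ <;> exact ⟨by omega, h2⟩

lemma div_key {B B' x y k : ℕ} (hB : 1 ≤ B) (hBB : B < B')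
    (h : x / B' < y / B) : (x + 1 + k) / B' ≤ (y + k) / B := by
  have hB' : 0 < B' := by omega
  have h1 : k / B' ≤ k / B := Nat.div_le_div_left (le_of_lt hBB) (by omega)
  have h2 : y / B + k / B ≤ (y + k) / B := by
    rw [Nat.le_div_iff_mul_le (by omega)]
    have := Nat.div_mul_le_self y B
    have := Nat.div_mul_le_self k B
    calc (y / B + k / B) * B = y / B * B + k / B * B := by ring
      _ ≤ y + k := by omega
  have hq : x / B' + 1 + k / B' ≤ (y + k) / B := by omega
  have hx := Nat.div_add_mod x B'
  have hk := Nat.div_add_mod k B'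
  have hrx : x % B' < B' := Nat.mod_lt _ hB'
  have hrk : k % B' < B' := Nat.mod_lt _ hB'
  have hgoal : x + 1 + k ≤ B' * ((y + k) / B) + (B' - 1) := by
    have e : x + 1 + k ≤ B' * (x / B' + 1 + k / B') + (B' - 1) := by
      have e2 : B' * (x / B' + 1 + k / B') = B' * (x / B') + B' + B' * (k / B') := by ring
      omega
    have e3 : B' * (x / B' + 1 + k / B') ≤ B' * ((y + k) / B) :=
      Nat.mul_le_mul_left B' hq
    omega
  have hlt : x + 1 + k < ((y + k) / B + 1) * B' := by
    have e4 : ((y + k) / B + 1) * B' = B' * ((y + k) / B) + B' := by ring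
    omega
  exact Nat.lt_succ_iff.mp ((Nat.div_lt_iff_lt_mul hB').mpr hlt)

lemma greedyHeight_sum_eq {n m : ℕ} (assign assign' : Fin m → Fin n) (t : ℕ) :
    ∑ i, greedyHeight m assign' t i = ∑ i, greedyHeight m assign t i := by
  classical
  induction t with
  | zero => simp [greedyHeight]
  | succ t ih =>
    by_cases ht : t < m
    · have e : ∀ (a : Fin m → Fin n), ∑ i, greedyHeight m a (t+1) i
          = (∑ i, greedyHeight m a t i) + 1 := by
        intro a
        have h : ∀ i, greedyHeight m a (t+1) i
            = greedyHeight m a t i + (if a ⟨t, ht⟩ = i then 1 else 0) :=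
          fun i => greedyHeight_succ a ht i
        rw [Finset.sum_congr rfl (fun i _ => h i), Finset.sum_add_distrib,
          Finset.sum_ite_eq]
        simp
      rw [e assign, e assign', ih]
    · have e : ∀ (a : Fin m → Fin n), ∑ i, greedyHeight m a (t+1) i
          = ∑ i, greedyHeight m a t i := fun a =>
        Finset.sum_congr rfl (fun i _ => greedyHeight_stable a ht i)
      rw [e assign, e assign', ih]

/-- Universal monotonicity: if machine `i₀` raises its bid from `b i₀` to `b' i₀`
(all other bids unchanged), then at every time `t` machine `i₀` receives at least
as many jobs among the first `t` jobs under `b'` as under `b`. -/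
theorem restricted_greedy_universally_monotone {n m : ℕ} (b b' : Fin n → ℕ)
    (π : Fin n → ℕ) (hπ : Function.Injective π)
    (Msets : Fin m → Finset (Fin n)) (i₀ : Fin n)
    (hb : ∀ i, 1 ≤ b i) (hagree : ∀ i, i ≠ i₀ → b' i = b i) (hincr : b i₀ < b' i₀)
    (assign assign' : Fin m → Fin n)
    (hg : IsRestrictedGreedy b π Msets assign)
    (hg' : IsRestrictedGreedy b' π Msets assign') :
    ∀ t ≤ m, greedyHeight m assign t i₀ ≤ greedyHeight m assign' t i₀ := by
  classical
  have inv : ∀ t : ℕ,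
      (∀ j, j ≠ i₀ → greedyHeight m assign' t j ≤ greedyHeight m assign t j) ∧
      (∀ k, (greedyHeight m assign' t i₀ + 1 + k) / b' i₀ ≤
            (greedyHeight m assign t i₀ + 1 + k) / b i₀) := by
    intro t
    induction t with
    | zero =>
      constructor
      · intro j _
        rw [greedyHeight_zero, greedyHeight_zero]
      · intro k
        rw [greedyHeight_zero, greedyHeight_zero]
        exact Nat.div_le_div_left (le_of_lt hincr) (hb i₀)
    | succ t ih =>
      by_cases ht : t < m
      · obtain ⟨hmem, hmin⟩ := hg ⟨t, ht⟩
        obtain ⟨hmem', hmin'⟩ := hg' ⟨t, ht⟩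
        constructor
        · -- part (a): other machines get no more jobs under b'
          intro j hj
          rw [greedyHeight_succ assign ht j, greedyHeight_succ assign' ht j]
          by_cases h1 : assign' ⟨t, ht⟩ = j
          · by_cases h2 : assign ⟨t, ht⟩ = j
            · simp only [h1, h2, if_true]
              exact Nat.add_le_add_right (ih.1 j hj) 1
            · simp only [h1, h2, if_true, if_false, Nat.add_zero]
              have hle := ih.1 j hj
              rcases Nat.lt_or_ge (greedyHeight m assign' t j) (greedyHeight m assign t j)
                with hlt | hge
              · omega
              · exfalso
                have heq : greedyHeight m assign' t j = greedyHeight m assign t j :=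
                  le_antisymm hle hge
                have hjmem : j ∈ Msets ⟨t, ht⟩ := h1 ▸ hmem'
                have hne1 : assign ⟨t, ht⟩ ≠ assign' ⟨t, ht⟩ := by rw [h1]; exact h2
                have hne2 : j ≠ assign ⟨t, ht⟩ := fun h => h2 h.symm
                have c1 : (greedyHeight m assign' t j + 1) / b' j
                      < (greedyHeight m assign' t (assign ⟨t,ht⟩) + 1) / b' (assign ⟨t,ht⟩) ∨
                    ((greedyHeight m assign' t j + 1) / b' j
                      = (greedyHeight m assign' t (assign ⟨t,ht⟩) + 1) / b' (assign ⟨t,ht⟩)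
                      ∧ π j < π (assign ⟨t,ht⟩)) := by
                  have h := hmin' (assign ⟨t,ht⟩) hmem hne1
                  rw [h1] at h
                  exact h
                have c2 : (greedyHeight m assign t (assign ⟨t,ht⟩) + 1) / b (assign ⟨t,ht⟩)
                      < (greedyHeight m assign t j + 1) / b j ∨
                    ((greedyHeight m assign t (assign ⟨t,ht⟩) + 1) / b (assign ⟨t,ht⟩)
                      = (greedyHeight m assign t j + 1) / b j
                      ∧ π (assign ⟨t,ht⟩) < π j) := hmin j hjmem hne2
                rw [hagree j hj, heq] at c1
                by_cases ha : assign ⟨t,ht⟩ = i₀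
                · rw [ha] at c1 c2
                  have d1 : (greedyHeight m assign' t i₀ + 1) / b' i₀
                      ≤ (greedyHeight m assign t i₀ + 1) / b i₀ := by
                    have h := ih.2 0
                    simpa using h
                  rcases c1 with c1 | ⟨c1, c1π⟩ <;> rcases c2 with c2 | ⟨c2, c2π⟩ <;> omega
                · have d1 : (greedyHeight m assign' t (assign ⟨t,ht⟩) + 1) / b' (assign ⟨t,ht⟩)
                      ≤ (greedyHeight m assign t (assign ⟨t,ht⟩) + 1) / b (assign ⟨t,ht⟩) := by
                    rw [hagree _ ha]
                    exact Nat.div_le_div_right (Nat.add_le_add_right (ih.1 _ ha) 1)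
                  rcases c1 with c1 | ⟨c1, c1π⟩ <;> rcases c2 with c2 | ⟨c2, c2π⟩ <;> omega
          · simp only [h1, if_false, Nat.add_zero]
            have hle := ih.1 j hj
            by_cases h2 : assign ⟨t,ht⟩ = j <;> simp only [h2, if_true, if_false] <;> omega
        · -- part (c): slot-cost domination for i₀
          intro k
          rw [greedyHeight_succ assign ht i₀, greedyHeight_succ assign' ht i₀]
          by_cases h1 : assign' ⟨t,ht⟩ = i₀ <;> by_cases h2 : assign ⟨t,ht⟩ = i₀ <;>
            simp only [h1, h2, if_true, if_false, Nat.add_zero]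
          · -- both assign to i₀
            have h := ih.2 (k+1)
            have e1 : greedyHeight m assign' t i₀ + 1 + (k+1)
                = greedyHeight m assign' t i₀ + 1 + 1 + k := by omega
            have e2 : greedyHeight m assign t i₀ + 1 + (k+1)
                = greedyHeight m assign t i₀ + 1 + 1 + k := by omega
            rw [e1, e2] at h
            exact h
          · -- only the b'-run assigns to i₀
            have hjmem : i₀ ∈ Msets ⟨t,ht⟩ := h1 ▸ hmem'
            have hne1 : assign ⟨t,ht⟩ ≠ assign' ⟨t,ht⟩ := by rw [h1]; exact h2
            have hne2 : (i₀ : Fin n) ≠ assign ⟨t,ht⟩ := fun h => h2 h.symm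
            have c1 : (greedyHeight m assign' t i₀ + 1) / b' i₀
                  < (greedyHeight m assign' t (assign ⟨t,ht⟩) + 1) / b' (assign ⟨t,ht⟩) ∨
                ((greedyHeight m assign' t i₀ + 1) / b' i₀
                  = (greedyHeight m assign' t (assign ⟨t,ht⟩) + 1) / b' (assign ⟨t,ht⟩)
                  ∧ π i₀ < π (assign ⟨t,ht⟩)) := by
              have h := hmin' (assign ⟨t,ht⟩) hmem hne1
              rw [h1] at h
              exact h
            have c2 : (greedyHeight m assign t (assign ⟨t,ht⟩) + 1) / b (assign ⟨t,ht⟩)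
                  < (greedyHeight m assign t i₀ + 1) / b i₀ ∨
                ((greedyHeight m assign t (assign ⟨t,ht⟩) + 1) / b (assign ⟨t,ht⟩)
                  = (greedyHeight m assign t i₀ + 1) / b i₀
                  ∧ π (assign ⟨t,ht⟩) < π i₀) := hmin i₀ hjmem hne2
            have d1 : (greedyHeight m assign' t (assign ⟨t,ht⟩) + 1) / b' (assign ⟨t,ht⟩)
                ≤ (greedyHeight m assign t (assign ⟨t,ht⟩) + 1) / b (assign ⟨t,ht⟩) := by
              rw [hagree _ h2]
              exact Nat.div_le_div_right (Nat.add_le_add_right (ih.1 _ h2) 1)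
            have d0 : (greedyHeight m assign' t i₀ + 1) / b' i₀
                ≤ (greedyHeight m assign t i₀ + 1) / b i₀ := by
              have h := ih.2 0
              simpa using h
            have hstrict : (greedyHeight m assign' t i₀ + 1) / b' i₀
                < (greedyHeight m assign t i₀ + 1) / b i₀ := by
              rcases c1 with c1 | ⟨c1, c1π⟩ <;> rcases c2 with c2 | ⟨c2, c2π⟩ <;> omega
            exact div_key (hb i₀) hincr hstrict
          · -- only the b-run assigns to i₀
            exact le_trans (ih.2 k) (Nat.div_le_div_right (by omega))
          · -- neither
            exact ih.2 k
      · constructor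
        · intro j hj
          rw [greedyHeight_stable assign ht j, greedyHeight_stable assign' ht j]
          exact ih.1 j hj
        · intro k
          rw [greedyHeight_stable assign ht i₀, greedyHeight_stable assign' ht i₀]
          exact ih.2 k
  intro t _
  have hsum := greedyHeight_sum_eq assign assign' t
  have h2 : ∑ j ∈ Finset.univ.erase i₀, greedyHeight m assign' t j
      ≤ ∑ j ∈ Finset.univ.erase i₀, greedyHeight m assign t j :=
    Finset.sum_le_sum (fun j hj => (inv t).1 j (Finset.ne_of_mem_erase hj))
  rw [← Finset.add_sum_erase _ _ (Finset.mem_univ i₀),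
      ← Finset.add_sum_erase _ _ (Finset.mem_univ i₀)] at hsum
  omega
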